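/- arXiv:1610.08906 — 3 statements merged into one kernel-verified Lean document; each statement's English description precedes it below -/
import Mathlib

section
/- Suppose a continuously evolving state satisfies p*(0) = 1/2, D(t) ∈ [0,1], |Ḋ(t)| ≤ 2, and ṗ*(t) = 1 whenever p*(t) < (1 + D(t))/2. Then there exists a time t ≤ 1/2 at which p*(t) = (1 + D(t))/2. -/
/-- Convergence of the continuous dynamic UCN: if `p*(0) = 1/2`,
`D(t) ∈ [0,1]`, `|Ḋ(t)| ≤ 2`, and `ṗ*(t) = 1` whenever the state is below
the plane `𝒫 = {p* = (1+D)/2}`, then the plane is reached by time `1/2`. -/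
theorem UCN_reaches_plane (pstar D : ℝ → ℝ)
    (hpdiff : Differentiable ℝ pstar) (hDdiff : Differentiable ℝ D)
    (h0 : pstar 0 = 1/2)
    (hD : ∀ t, D t ∈ Set.Icc (0:ℝ) 1)
    (hDdot : ∀ t, |deriv D t| ≤ 2)
    (hdyn : ∀ t, pstar t < (1 + D t) / 2 → deriv pstar t = 1) :
    ∃ t : ℝ, 0 ≤ t ∧ t ≤ 1/2 ∧ pstar t = (1 + D t) / 2 := by
  by_contra h
  push_neg at h
  set f : ℝ → ℝ := fun t => pstar t - (1 + D t) / 2 with hf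
  have hfcont : Continuous f := by
    exact (hpdiff.continuous).sub ((continuous_const.add hDdiff.continuous).div_const 2)
  have hne : ∀ t ∈ Set.Icc (0:ℝ) (1/2), f t ≠ 0 := by
    intro t ht hzero
    exact h t ht.1 ht.2 (by simpa [hf, sub_eq_zero] using hzero)
  have hf0 : f 0 < 0 := by
    have h1 := hne 0 (by constructor <;> norm_num)
    have h2 : f 0 ≤ 0 := by
      simp only [hf, h0]
      have := (hD 0).1
      linarith
    exact lt_of_le_of_ne h2 h1
  have hneg : ∀ t ∈ Set.Icc (0:ℝ) (1/2), f t < 0 := by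
    intro t ht
    rcases lt_or_ge (f t) 0 with h' | h'
    · exact h'
    · exfalso
      have hmem : (0:ℝ) ∈ Set.Icc (f 0) (f t) := ⟨hf0.le, h'⟩
      have := intermediate_value_Icc ht.1 (hfcont.continuousOn) hmem
      obtain ⟨s, hs, hs0⟩ := this
      exact hne s ⟨hs.1, hs.2.trans ht.2⟩ hs0
  -- on [0,1/2], deriv pstar = 1, so pstar (1/2) = 1
  have hderivf : ∀ x ∈ Set.Ico (0:ℝ) (1/2), HasDerivWithinAt pstar ((fun _ => (1:ℝ)) x) (Set.Ici x) x := by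
    intro x hx
    have hlt : pstar x < (1 + D x) / 2 := by
      have := hneg x ⟨hx.1, hx.2.le⟩
      simp only [hf] at this; linarith
    have := (hpdiff x).hasDerivAt
    rw [hdyn x hlt] at this
    exact this.hasDerivWithinAt
  have hderivg : ∀ x ∈ Set.Ico (0:ℝ) (1/2), HasDerivWithinAt (fun t : ℝ => t + 1/2) ((fun _ => (1:ℝ)) x) (Set.Ici x) x := by
    intro x _
    simpa using ((hasDerivAt_id x).add_const (1/2:ℝ)).hasDerivWithinAt
  have heq := eq_of_has_deriv_right_eq hderivf hderivg
    (hpdiff.continuous.continuousOn) ((continuous_id.add continuous_const).continuousOn) (by simp [h0])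
  have hphalf : pstar (1/2) = 1 := by
    have := heq (1/2) ⟨by norm_num, le_rfl⟩
    norm_num at this
    linarith
  have := hneg (1/2) ⟨by norm_num, le_rfl⟩
  have hD2 := (hD (1/2)).2
  simp only [hf, hphalf] at this
  linarith
end

section
/- For c ≤ 2, max over D ∈ [0,c] of D(1 − p*) subject to p* = min(1/2 + D/(2c), 1) equals c/8; for c > 2, the maximum over D ∈ [0,1] equals 1/2 − 1/(2c). -/
/-- Regret bound on the subspace `𝒫_γ = {p* = min(1/2 + D/(2c), 1)}` for a
`(c/n)`-large binary-action game: for `c ≤ 2` the maximal regret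
`D(1 − p*)` over `D ∈ [0,c]` is `c/8`, and for `c > 2` the maximal regret
over `D ∈ [0,1]` is `1/2 − 1/(2c)`. -/
theorem regret_on_P_gamma (c : ℝ) (hc : 0 < c) :
    (c ≤ 2 →
      IsGreatest
        {r : ℝ | ∃ D : ℝ, D ∈ Set.Icc 0 c ∧
          r = D * (1 - min (1/2 + D/(2*c)) 1)} (c/8)) ∧
    (2 < c →
      IsGreatest
        {r : ℝ | ∃ D : ℝ, D ∈ Set.Icc (0:ℝ) 1 ∧
          r = D * (1 - min (1/2 + D/(2*c)) 1)} (1/2 - 1/(2*c))) := by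
  constructor
  · intro _
    constructor
    · refine ⟨c/2, ⟨by linarith, by linarith⟩, ?_⟩
      have h0 : (c/2)/(2*c) = 1/4 := by
        rw [div_div, show (2:ℝ) * (2*c) = c * 4 by ring, ← div_div,
          div_self hc.ne']
      have h1 : min (1/2 + (c/2)/(2*c)) 1 = 3/4 := by rw [h0]; norm_num
      rw [h1]; ring
    · rintro r ⟨D, ⟨hD0, hDc⟩, rfl⟩
      have hmin : min (1/2 + D/(2*c)) 1 = 1/2 + D/(2*c) := by
        apply min_eq_left
        have : D/(2*c) ≤ 1/2 := by
          rw [div_le_div_iff₀ (by linarith) (by norm_num)]; linarith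
        linarith
      rw [hmin]
      have key : c/8 - D * (1 - (1/2 + D/(2*c))) = (D - c/2)^2 / (2*c) := by
        field_simp; ring
      nlinarith [sq_nonneg (D - c/2), div_nonneg (sq_nonneg (D - c/2)) (by linarith : (0:ℝ) ≤ 2*c)]
  · intro hc2
    constructor
    · refine ⟨1, ⟨by norm_num, le_refl 1⟩, ?_⟩
      have hmin : min (1/2 + 1/(2*c)) 1 = 1/2 + 1/(2*c) := by
        apply min_eq_left
        have : 1/(2*c) ≤ 1/2 := by
          rw [div_le_div_iff₀ (by linarith) (by norm_num)]; linarith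
        linarith
      rw [hmin]; ring
    · rintro r ⟨D, ⟨hD0, hD1⟩, rfl⟩
      have hmin : min (1/2 + D/(2*c)) 1 = 1/2 + D/(2*c) := by
        apply min_eq_left
        have : D/(2*c) ≤ 1/2 := by
          rw [div_le_div_iff₀ (by linarith) (by norm_num)]; nlinarith
        linarith
      rw [hmin]
      have key : (1/2 - 1/(2*c)) - D * (1 - (1/2 + D/(2*c)))
          = (1 - D) * (c - 1 - D) / (2*c) := by
        field_simp; ring
      have : 0 ≤ (1 - D) * (c - 1 - D) / (2*c) :=
        div_nonneg (mul_nonneg (by linarith) (by linarith)) (by linarith)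
      linarith
end

section
/- The maximal k-point left Riemann sum under the triangle y = x on [0,1] equals (1/2)·(k/(k+1)), attained by the partition {1/(k+1), 2/(k+1), …, k/(k+1)}; i.e., sup over 0 ≤ x₁ ≤ … ≤ x_k ≤ 1 of Σ_{i=1}^{k} x_i (x_{i+1} − x_i) (with x_{k+1} = 1) equals k/(2(k+1)). -/
open Finset

/-! The left sum telescopes: `2 xᵢ (xᵢ₊₁ - xᵢ) = xᵢ₊₁² - xᵢ² - (xᵢ₊₁ - xᵢ)²`, so with `x₀ = 0`
twice the left sum is `x_{k+1}²` minus the sum of the squared increments. The `k + 1` increments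
add up to `x_{k+1}`, so by Cauchy–Schwarz their squares add up to at least `x_{k+1}² / (k + 1)`,
with equality exactly for equal increments, i.e. for the equidistant partition. -/

theorem sum_Icc_one_eq_sum_range_succ {M : Type*} [AddCommMonoid M] (f : ℕ → M) (hf : f 0 = 0)
    (n : ℕ) : ∑ i ∈ Icc 1 n, f i = ∑ i ∈ range (n + 1), f i := by
  rw [range_eq_Ico, Ico_add_one_right_eq_Icc, ← insert_Icc_add_one_left_eq_Icc n.zero_le,
    sum_insert (by simp), hf, zero_add, zero_add]

theorem two_mul_sum_mul_sub_eq (x : ℕ → ℝ) (n : ℕ) :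
    2 * ∑ i ∈ range n, x i * (x (i + 1) - x i)
      = x n ^ 2 - x 0 ^ 2 - ∑ i ∈ range n, (x (i + 1) - x i) ^ 2 := by
  induction n with
  | zero => simp
  | succ n ih => rw [sum_range_succ, sum_range_succ, mul_add, ih]; ring

theorem sq_sub_le_mul_sum_sq_sub (x : ℕ → ℝ) (n : ℕ) :
    (x n - x 0) ^ 2 ≤ n * ∑ i ∈ range n, (x (i + 1) - x i) ^ 2 := by
  have hcs := sq_sum_le_card_mul_sum_sq (s := range n) (f := fun i => x (i + 1) - x i)
  rwa [sum_range_sub, card_range] at hcs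

theorem two_mul_sum_mul_sub_le (x : ℕ → ℝ) (hx : x 0 = 0) (n : ℕ) :
    2 * ∑ i ∈ range (n + 1), x i * (x (i + 1) - x i) ≤ n / (n + 1) * x (n + 1) ^ 2 := by
  have hcs := sq_sub_le_mul_sum_sq_sub x (n + 1)
  rw [hx, Nat.cast_succ] at hcs
  rw [two_mul_sum_mul_sub_eq, hx]
  rw [div_mul_eq_mul_div, le_div_iff₀ (by positivity)]
  nlinarith

theorem two_mul_sum_Icc_mul_sub_equidistant (n : ℕ) :
    2 * ∑ i ∈ Icc 1 n, ((i : ℝ) / (n + 1)) * (((i : ℝ) + 1) / (n + 1) - i / (n + 1))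
      = n / (n + 1) := by
  have h := two_mul_sum_mul_sub_eq (fun i => (i / (n + 1) : ℝ)) (n + 1)
  push_cast at h
  rw [sum_Icc_one_eq_sum_range_succ _ (by simp), h]
  simp_rw [add_div, add_sub_cancel_left, sum_const, card_range, nsmul_eq_mul]
  field_simp
  push_cast
  ring

theorem two_mul_sum_Icc_mul_sub_le (x : ℕ → ℝ) (n : ℕ) :
    2 * ∑ i ∈ Icc 1 n, x i * (x (i + 1) - x i) ≤ n / (n + 1) * x (n + 1) ^ 2 := by
  set y := Function.update x 0 0
  have hxy : ∀ i ≠ 0, y i = x i := fun i hi => Function.update_of_ne hi _ _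
  calc 2 * ∑ i ∈ Icc 1 n, x i * (x (i + 1) - x i)
      = 2 * ∑ i ∈ Icc 1 n, y i * (y (i + 1) - y i) := by
        congr 1
        refine sum_congr rfl fun i hi => ?_
        rw [hxy i (by grind), hxy (i + 1) i.succ_ne_zero]
    _ = 2 * ∑ i ∈ range (n + 1), y i * (y (i + 1) - y i) := by
        rw [sum_Icc_one_eq_sum_range_succ _ (by simp [y])]
    _ ≤ n / (n + 1) * y (n + 1) ^ 2 := two_mul_sum_mul_sub_le y (by simp [y]) n
    _ = n / (n + 1) * x (n + 1) ^ 2 := by rw [hxy _ n.succ_ne_zero]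

theorem max_left_sum_unit_triangle_general (k : ℕ) :
    IsGreatest
      {s : ℝ | ∃ x : ℕ → ℝ,
        (∀ i, 1 ≤ i → i ≤ k → 0 ≤ x i ∧ x i ≤ 1) ∧
        (∀ i j, 1 ≤ i → i ≤ j → j ≤ k → x i ≤ x j) ∧
        x (k+1) = 1 ∧
        s = ∑ i ∈ Icc 1 k, x i * (x (i+1) - x i)}
      ((k:ℝ) / (2*((k:ℝ)+1))) ∧
    (∑ i ∈ Icc 1 k, ((i:ℝ)/((k:ℝ)+1)) * (((i:ℝ)+1)/((k:ℝ)+1) - (i:ℝ)/((k:ℝ)+1))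
      = (k:ℝ) / (2*((k:ℝ)+1))) := by
  have hequidistant : ∑ i ∈ Icc 1 k, ((i:ℝ)/((k:ℝ)+1)) * (((i:ℝ)+1)/((k:ℝ)+1) - (i:ℝ)/((k:ℝ)+1))
      = (k:ℝ) / (2*((k:ℝ)+1)) := by
    rw [mul_comm, ← div_div, ← two_mul_sum_Icc_mul_sub_equidistant k]
    ring
  refine ⟨⟨⟨fun i => i / (k + 1), fun i _ hik => ⟨by positivity, ?_⟩,
    fun i j _ hij _ => by dsimp only; gcongr, by push_cast; exact div_self (by positivity), ?_⟩,
    ?_⟩, hequidistant⟩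
  · rw [div_le_one₀ (by positivity)]
    exact_mod_cast hik.trans k.le_succ
  · simpa using hequidistant.symm
  · rintro s ⟨x, -, -, hx, rfl⟩
    have h := two_mul_sum_Icc_mul_sub_le x k
    rw [hx, one_pow, mul_one] at h
    rw [mul_comm, ← div_div, le_div_iff₀ two_pos]
    linarith

/-- The maximal `k`-point left Riemann sum under the triangle `y = x` on
`[0,1]` equals `(1/2)·(k/(k+1))`, attained at the partition
`{1/(k+1), …, k/(k+1)}` (with `x_{k+1} = 1`). -/
theorem max_left_sum_unit_triangle (k : ℕ) (hk : 1 ≤ k) :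
    IsGreatest
      {s : ℝ | ∃ x : ℕ → ℝ,
        (∀ i, 1 ≤ i → i ≤ k → 0 ≤ x i ∧ x i ≤ 1) ∧
        (∀ i j, 1 ≤ i → i ≤ j → j ≤ k → x i ≤ x j) ∧
        x (k+1) = 1 ∧
        s = ∑ i ∈ Icc 1 k, x i * (x (i+1) - x i)}
      ((k:ℝ) / (2*((k:ℝ)+1))) ∧
    (∑ i ∈ Icc 1 k, ((i:ℝ)/((k:ℝ)+1)) * (((i:ℝ)+1)/((k:ℝ)+1) - (i:ℝ)/((k:ℝ)+1))
      = (k:ℝ) / (2*((k:ℝ)+1))) :=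
  max_left_sum_unit_triangle_general k
end
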